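/- arXiv:2104.10365 — 4 statements merged into one kernel-verified Lean document; each statement's English description precedes it below -/
import Mathlib

section
/- Fix n ≥ 2, |β| < 1, and reals α, γ, δ. Suppose y ∈ ℝⁿ and x ∈ ℝⁿ satisfy, for every i, y_i = α + β·(1/(n-1))·Σ_{j≠i} y_j + δ·(1/(n-1))·Σ_{j≠i} x_j + γ·x_i. Then for every i, y_i = α/(1-β) + (Σ_{j≠i} x_j)·π₁(n) + x_i·π₂(n), where π₁(n) = ((δ+βγ)/(n-1)) / (1 - β(β+n-2)/(n-1)) and π₂(n) = (γ + β(δ - γ(n-2))/(n-1)) / (1 - β(β+n-2)/(n-1)). -/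
/-!
Summing the defining equations over all `i` gives the aggregate
`(1 - β) Σ y = n α + (δ + γ) Σ x`, since every `y_j` occurs in exactly `n - 1` of the sums over
`j ≠ i`. Substituting the aggregate into the `i`-th equation leaves a linear equation in `y_i`
alone, with coefficient `n - 1 + β`; this and `1 - β` are nonzero because `|β| < 1`, and the
common denominator of `π₁, π₂` factors as
`1 - β (β + n - 2) / (n - 1) = (1 - β) (n - 1 + β) / (n - 1)`.
-/

open Finset

section LinearInMeans

variable {ι : Type*} [Fintype ι] [DecidableEq ι]

theorem sum_sum_erase_univ {R : Type*} [CommRing R] (f : ι → R) :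
    ∑ i, ∑ j ∈ univ.erase i, f j = ((Fintype.card ι : R) - 1) * ∑ j, f j := by
  simp only [sum_erase_eq_sub (mem_univ _), sum_sub_distrib, sum_const, card_univ, nsmul_eq_mul]
  ring

def IsLinearInMeans (α β γ δ : ℝ) (y x : ι → ℝ) : Prop :=
  ∀ i, y i = α
    + β * ((1 / ((Fintype.card ι : ℝ) - 1)) * ∑ j ∈ univ.erase i, y j)
    + δ * ((1 / ((Fintype.card ι : ℝ) - 1)) * ∑ j ∈ univ.erase i, x j)
    + γ * x i

variable {α β γ δ : ℝ} {y x : ι → ℝ}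

theorem IsLinearInMeans.one_sub_mul_sum (h : IsLinearInMeans α β γ δ y x)
    (hcard : Fintype.card ι ≠ 1) :
    (1 - β) * ∑ j, y j = Fintype.card ι * α + (δ + γ) * ∑ j, x j := by
  have hm : (Fintype.card ι : ℝ) - 1 ≠ 0 := sub_ne_zero.mpr (mod_cast hcard)
  have hsum := sum_congr rfl fun i (_ : i ∈ univ) => h i
  simp only [sum_add_distrib, ← mul_sum, sum_sum_erase_univ, sum_const, card_univ,
    nsmul_eq_mul] at hsum
  field_simp at hsum
  linear_combination hsum

theorem IsLinearInMeans.card_sub_one_add_mul_apply (h : IsLinearInMeans α β γ δ y x)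
    (hcard : Fintype.card ι ≠ 1) (i : ι) :
    ((Fintype.card ι : ℝ) - 1 + β) * y i = ((Fintype.card ι : ℝ) - 1) * α + β * ∑ j, y j
      + δ * (∑ j, x j - x i) + γ * ((Fintype.card ι : ℝ) - 1) * x i := by
  have hm : (Fintype.card ι : ℝ) - 1 ≠ 0 := sub_ne_zero.mpr (mod_cast hcard)
  have hi := h i
  simp only [sum_erase_eq_sub (mem_univ _)] at hi
  field_simp at hi
  linear_combination hi

end LinearInMeans

/-- Reduced form of the linear-in-means model: if
`y_i = α + β·avg_{j≠i} y_j + δ·avg_{j≠i} x_j + γ x_i` for all `i`, then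
`y_i = α/(1-β) + (Σ_{j≠i} x_j)·π₁(n) + x_i·π₂(n)`. -/
theorem stmt_2 (n : ℕ) (hn : 2 ≤ n) (β α γ δ : ℝ) (hβ : |β| < 1)
    (y x : Fin n → ℝ)
    (hstruc : ∀ i, y i = α
      + β * ((1 / ((n : ℝ) - 1)) * ∑ j ∈ univ.erase i, y j)
      + δ * ((1 / ((n : ℝ) - 1)) * ∑ j ∈ univ.erase i, x j)
      + γ * x i) :
    ∀ i, y i = α / (1 - β)
      + (∑ j ∈ univ.erase i, x j) *
          (((δ + β * γ) / ((n : ℝ) - 1)) / (1 - β * (β + (n : ℝ) - 2) / ((n : ℝ) - 1)))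
      + x i *
          ((γ + β * (δ - γ * ((n : ℝ) - 2)) / ((n : ℝ) - 1))
            / (1 - β * (β + (n : ℝ) - 2) / ((n : ℝ) - 1))) := by
  intro i
  have h : IsLinearInMeans α β γ δ y x := by
    simpa only [IsLinearInMeans, Fintype.card_fin] using hstruc
  have hcard : Fintype.card (Fin n) ≠ 1 := by rw [Fintype.card_fin]; omega
  have hsum := h.one_sub_mul_sum hcard
  have hi := h.card_sub_one_add_mul_apply hcard i
  simp only [Fintype.card_fin] at hsum hi
  obtain ⟨hβ_gt, hβ_lt⟩ := abs_lt.mp hβ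
  have hn' : (2 : ℝ) ≤ n := mod_cast hn
  have hm : (n : ℝ) - 1 ≠ 0 := by linarith
  have hmβ : (n : ℝ) - 1 + β ≠ 0 := by linarith
  have hβ1 : 1 - β ≠ 0 := by linarith
  have hden : 1 - β * (β + (n : ℝ) - 2) / ((n : ℝ) - 1)
      = (1 - β) * ((n : ℝ) - 1 + β) / ((n : ℝ) - 1) := by
    field_simp
    ring
  rw [hden, sum_erase_eq_sub (mem_univ i)]
  field_simp
  -- this combination eliminates `Σ y`
  linear_combination (1 - β) * hi + β * hsum
end

section
/- Fix n ≥ 2, |β| < 1, and reals α, γ, δ. Suppose y ∈ ℝⁿ and x ∈ ℝⁿ satisfy, for every i, y_i = α + β·(1/(n-1))·Σ_{j≠i} y_j + δ·(1/(n-1))·Σ_{j≠i} x_j + γ·x_i. Let ȳ_i = y_i - (1/n)Σ_j y_j and x̄_i = x_i - (1/n)Σ_j x_j denote within-group demeaned variables. Then ȳ_i = x̄_i · π(n) for all i, where π(n) = (γ - δ/(n-1)) / (1 + β/(n-1)). -/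
/-!
Adding `β m y_i` to both sides of the structural equation (`m = 1/(n-1)`) turns the sums over the
others into the full group sums, which are common to all members: hence
`(1 + β m) y_i = c + (γ - δ m) x_i` with `c` independent of `i`. So `y` is an affine function of
`x` with slope `π(n)`, and demeaning removes the intercept. Since `|m| ≤ 1` for every `n`
(`m = 0` at `n = 1`, as `1/0 = 0`), `|β| < 1` keeps `1 + β m` away from zero.
-/

open Finset

variable {ι K : Type*} [Fintype ι] [Field K]

def demean (x : ι → K) (i : ι) : K :=
  x i - 1 / (Fintype.card ι : K) * ∑ j, x j

theorem demean_of_affine [CharZero K] {x y : ι → K} {a b : K} (h : ∀ i, y i = a + b * x i)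
    (i : ι) : demean y i = demean x i * b := by
  have : Nonempty ι := ⟨i⟩
  have hcard : (Fintype.card ι : K) ≠ 0 := Nat.cast_ne_zero.mpr Fintype.card_ne_zero
  have hsum : ∑ j, y j = Fintype.card ι * a + b * ∑ j, x j := by
    simp only [h, sum_add_distrib, sum_const, card_univ, nsmul_eq_mul, mul_sum]
  rw [demean, demean, h i, hsum]
  field_simp
  ring

theorem exists_affine_of_linearInMeans [DecidableEq ι] {x y : ι → K} {α β γ δ m : K}
    (hβm : 1 + β * m ≠ 0)
    (h : ∀ i, y i = α + β * (m * ∑ j ∈ univ.erase i, y j)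
      + δ * (m * ∑ j ∈ univ.erase i, x j) + γ * x i) :
    ∃ c, ∀ i, y i = c + (γ - δ * m) / (1 + β * m) * x i := by
  refine ⟨(α + β * m * ∑ j, y j + δ * m * ∑ j, x j) / (1 + β * m), fun i => ?_⟩
  have hi := h i
  rw [sum_erase_eq_sub (mem_univ i), sum_erase_eq_sub (mem_univ i)] at hi
  field_simp
  linear_combination hi

theorem abs_one_div_natCast_sub_one_le (n : ℕ) : |1 / ((n : ℝ) - 1)| ≤ 1 := by
  rcases Nat.lt_or_ge n 2 with hn | hn
  · interval_cases n <;> norm_num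
  · have : (1 : ℝ) ≤ n - 1 := by
      have : (2 : ℝ) ≤ n := by exact_mod_cast hn
      linarith
    rw [abs_of_pos (by positivity)]
    exact div_le_one_of_le₀ this (by linarith)

theorem one_add_mul_ne_zero_of_abs_lt_one {β m : ℝ} (hβ : |β| < 1) (hm : |m| ≤ 1) : 1 + β * m ≠ 0 := by
  have : |β * m| < 1 := by
    rw [abs_mul]
    nlinarith [abs_nonneg β, abs_nonneg m]
  intro h
  rw [show β * m = -1 by linarith] at this
  norm_num at this

theorem stmt_3_general (n : ℕ) (β α γ δ : ℝ) (hβ : |β| < 1)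
    (y x : Fin n → ℝ)
    (hstruc : ∀ i, y i = α
      + β * ((1 / ((n : ℝ) - 1)) * ∑ j ∈ univ.erase i, y j)
      + δ * ((1 / ((n : ℝ) - 1)) * ∑ j ∈ univ.erase i, x j)
      + γ * x i) :
    ∀ i, y i - (1 / (n : ℝ)) * ∑ j, y j
      = (x i - (1 / (n : ℝ)) * ∑ j, x j)
        * ((γ - δ / ((n : ℝ) - 1)) / (1 + β / ((n : ℝ) - 1))) := by
  intro i
  have hβm := one_add_mul_ne_zero_of_abs_lt_one hβ (abs_one_div_natCast_sub_one_le n)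
  obtain ⟨c, hc⟩ := exists_affine_of_linearInMeans hβm hstruc
  have hdemean := demean_of_affine hc i
  simp only [demean, Fintype.card_fin] at hdemean
  simpa only [div_eq_mul_one_div δ, div_eq_mul_one_div β] using hdemean

/-- Within-group transformation of the linear-in-means model: demeaned outcomes satisfy
`ȳ_i = x̄_i · π(n)` with `π(n) = (γ - δ/(n-1)) / (1 + β/(n-1))`. -/
theorem stmt_3 (n : ℕ) (hn : 2 ≤ n) (β α γ δ : ℝ) (hβ : |β| < 1)
    (y x : Fin n → ℝ)
    (hstruc : ∀ i, y i = α
      + β * ((1 / ((n : ℝ) - 1)) * ∑ j ∈ univ.erase i, y j)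
      + δ * ((1 / ((n : ℝ) - 1)) * ∑ j ∈ univ.erase i, x j)
      + γ * x i) :
    ∀ i, y i - (1 / (n : ℝ)) * ∑ j, y j
      = (x i - (1 / (n : ℝ)) * ∑ j, x j)
        * ((γ - δ / ((n : ℝ) - 1)) / (1 + β / ((n : ℝ) - 1))) :=
  stmt_3_general n β α γ δ hβ y x hstruc
end

section
/- Define π(n) = (γ(n-1) - δ)/(n-1+β) for n ≥ 2 and |β| < 1. Then π(n) is constant as a function of n (over integers n ≥ 2) if and only if γβ + δ = 0. -/
/-!
Cross-multiplying, `(γa - δ)(b + β) - (γb - δ)(a + β) = (γβ + δ)(a - b)`, so two values of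
`x ↦ (γx - δ)/(x + β)` at distinct points agree exactly when `γβ + δ = 0`. For `n ≥ 2` and
`β > -1` the denominators `n - 1 + β` are positive, and `n = 2, 3` give two distinct points.
-/

theorem div_add_eq_div_add_iff {K : Type*} [Field K] {a b β γ δ : K}
    (ha : a + β ≠ 0) (hb : b + β ≠ 0) (hab : a ≠ b) :
    (γ * a - δ) / (a + β) = (γ * b - δ) / (b + β) ↔ γ * β + δ = 0 := by
  rw [div_eq_div_iff ha hb, ← sub_eq_zero,
    show (γ * a - δ) * (b + β) - (γ * b - δ) * (a + β) = (γ * β + δ) * (a - b) by ring,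
    mul_eq_zero, sub_eq_zero]
  simp [hab]

theorem natCast_sub_one_add_ne_zero {β : ℝ} (hβ : -1 < β) {n : ℕ} (hn : 2 ≤ n) :
    (n : ℝ) - 1 + β ≠ 0 := by
  have : (2 : ℝ) ≤ n := by exact_mod_cast hn
  linarith

/-- `π(n) = (γ(n-1) - δ)/(n-1+β)` is constant over integers `n ≥ 2` if and only if
`γβ + δ = 0`. -/
theorem stmt_4 (β γ δ : ℝ) (hβ : |β| < 1) :
    (∀ n m : ℕ, 2 ≤ n → 2 ≤ m →
        (γ * ((n : ℝ) - 1) - δ) / ((n : ℝ) - 1 + β)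
          = (γ * ((m : ℝ) - 1) - δ) / ((m : ℝ) - 1 + β))
      ↔ γ * β + δ = 0 := by
  have hden : ∀ {n : ℕ}, 2 ≤ n → (n : ℝ) - 1 + β ≠ 0 :=
    natCast_sub_one_add_ne_zero (abs_lt.mp hβ).1
  constructor
  · intro hconst
    exact (div_add_eq_div_add_iff (hden le_rfl) (hden (by norm_num)) (by norm_num)).1
      (hconst 2 3 le_rfl (by norm_num))
  · intro h n m hn hm
    rcases eq_or_ne n m with rfl | hnm
    · rfl
    · exact (div_add_eq_div_add_iff (hden hn) (hden hm) (by simpa using hnm)).2 h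
end

section
/- Let 2 ≤ n₁ < n₂ < n₃ be integers. Suppose (γ, δ, β) and (γ', δ', β') both lie in ℝ × ℝ × (-1,1), satisfy γβ + δ ≠ 0 and γ'β' + δ' ≠ 0, and satisfy π(n_k; γ, δ, β) = π(n_k; γ', δ', β') for k = 1, 2, 3, where π(n; γ, δ, β) = (γ(n-1) - δ)/(n-1+β). Then (γ, δ, β) = (γ', δ', β'). -/
/-
Cross-multiplying `π(n; γ, δ, β) = π(n; γ', δ', β')` shows that `x = n - 1` is a root of a
polynomial of degree at most two whose coefficients are `γ - γ'`, `γβ' - γ'β - δ + δ'` and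
`δ'β - δβ'`. Three distinct roots force all three coefficients to vanish. Then `γ = γ'`, and
eliminating `δ'` between the remaining two equations gives `(γβ + δ)(β - β') = 0`.
-/

theorem eq_zero_of_quadratic_eq_zero_of_three_roots {R : Type*} [CommRing R] [IsDomain R]
    {a b c x₁ x₂ x₃ : R} (h₁₂ : x₁ ≠ x₂) (h₁₃ : x₁ ≠ x₃) (h₂₃ : x₂ ≠ x₃)
    (hx₁ : a * x₁ ^ 2 + b * x₁ + c = 0) (hx₂ : a * x₂ ^ 2 + b * x₂ + c = 0)
    (hx₃ : a * x₃ ^ 2 + b * x₃ + c = 0) :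
    a = 0 ∧ b = 0 ∧ c = 0 := by
  have slope₁₂ : a * (x₁ + x₂) + b = 0 := by
    refine (mul_eq_zero.mp ?_).resolve_left (sub_ne_zero.mpr h₁₂.symm)
    linear_combination hx₂ - hx₁
  have slope₂₃ : a * (x₂ + x₃) + b = 0 := by
    refine (mul_eq_zero.mp ?_).resolve_left (sub_ne_zero.mpr h₂₃.symm)
    linear_combination hx₃ - hx₂
  have ha : a = 0 := by
    refine (mul_eq_zero.mp ?_).resolve_right (sub_ne_zero.mpr h₁₃.symm)
    linear_combination slope₂₃ - slope₁₂
  have hb : b = 0 := by linear_combination slope₁₂ - (x₁ + x₂) * ha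
  exact ⟨ha, hb, by linear_combination hx₁ - x₁ ^ 2 * ha - x₁ * hb⟩

theorem div_eq_div_iff_quadratic_eq_zero {K : Type*} [Field K] {γ δ β γ' δ' β' x : K}
    (hβ : x + β ≠ 0) (hβ' : x + β' ≠ 0) :
    (γ * x - δ) / (x + β) = (γ' * x - δ') / (x + β') ↔
      (γ - γ') * x ^ 2 + (γ * β' - γ' * β - δ + δ') * x + (δ' * β - δ * β') = 0 := by
  rw [div_eq_div_iff hβ hβ', ← sub_eq_zero]
  ring_nf

theorem eq_of_quadratic_coeffs_eq_zero {R : Type*} [CommRing R] [IsDomain R]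
    {γ δ β γ' δ' β' : R} (hnd : γ * β + δ ≠ 0) (ha : γ - γ' = 0)
    (hb : γ * β' - γ' * β - δ + δ' = 0) (hc : δ' * β - δ * β' = 0) :
    γ = γ' ∧ δ = δ' ∧ β = β' := by
  have hγ : γ = γ' := sub_eq_zero.mp ha
  have hβ : β = β' := by
    refine sub_eq_zero.mp ((mul_eq_zero.mp ?_).resolve_left hnd)
    linear_combination hc - β * hb + β ^ 2 * ha
  subst hγ hβ
  exact ⟨rfl, by linear_combination -hb, rfl⟩

theorem stmt_5_general (n₁ n₂ n₃ : ℕ) (h1 : 2 ≤ n₁) (h12 : n₁ < n₂) (h23 : n₂ < n₃)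
    (γ δ β γ' δ' β' : ℝ) (hβ : |β| < 1) (hβ' : |β'| < 1)
    (hnd : γ * β + δ ≠ 0)
    (heq : ∀ n : ℕ, n = n₁ ∨ n = n₂ ∨ n = n₃ →
      (γ * ((n : ℝ) - 1) - δ) / ((n : ℝ) - 1 + β)
        = (γ' * ((n : ℝ) - 1) - δ') / ((n : ℝ) - 1 + β')) :
    γ = γ' ∧ δ = δ' ∧ β = β' := by
  have denom_ne_zero : ∀ n : ℕ, 2 ≤ n → ∀ b : ℝ, |b| < 1 → (n : ℝ) - 1 + b ≠ 0 := by
    intro n hn b hb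
    have : (2 : ℝ) ≤ n := by exact_mod_cast hn
    linarith [(abs_lt.mp hb).1]
  have root : ∀ n : ℕ, n = n₁ ∨ n = n₂ ∨ n = n₃ →
      (γ - γ') * ((n : ℝ) - 1) ^ 2 + (γ * β' - γ' * β - δ + δ') * ((n : ℝ) - 1)
        + (δ' * β - δ * β') = 0 := by
    intro n hn
    have h2n : 2 ≤ n := by omega
    exact (div_eq_div_iff_quadratic_eq_zero (denom_ne_zero n h2n β hβ)
      (denom_ne_zero n h2n β' hβ')).mp (heq n hn)
  have distinct : ∀ {m n : ℕ}, m < n → (m : ℝ) - 1 ≠ (n : ℝ) - 1 := fun hmn =>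
    sub_left_injective.ne (Nat.cast_injective.ne hmn.ne)
  obtain ⟨ha, hb, hc⟩ := eq_zero_of_quadratic_eq_zero_of_three_roots
    (distinct h12) (distinct (h12.trans h23)) (distinct h23)
    (root n₁ (by simp)) (root n₂ (by simp)) (root n₃ (by simp))
  exact eq_of_quadratic_coeffs_eq_zero hnd ha hb hc

/-- Identification from three group sizes: if two parameter vectors in
`ℝ × ℝ × (-1,1)` with `γβ + δ ≠ 0` produce the same reduced-form coefficients
`π(n) = (γ(n-1) - δ)/(n-1+β)` at three distinct group sizes `2 ≤ n₁ < n₂ < n₃`,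
then they are equal. -/
theorem stmt_5 (n₁ n₂ n₃ : ℕ) (h1 : 2 ≤ n₁) (h12 : n₁ < n₂) (h23 : n₂ < n₃)
    (γ δ β γ' δ' β' : ℝ) (hβ : |β| < 1) (hβ' : |β'| < 1)
    (hnd : γ * β + δ ≠ 0) (hnd' : γ' * β' + δ' ≠ 0)
    (heq : ∀ n : ℕ, n = n₁ ∨ n = n₂ ∨ n = n₃ →
      (γ * ((n : ℝ) - 1) - δ) / ((n : ℝ) - 1 + β)
        = (γ' * ((n : ℝ) - 1) - δ') / ((n : ℝ) - 1 + β')) :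
    γ = γ' ∧ δ = δ' ∧ β = β' :=
  stmt_5_general n₁ n₂ n₃ h1 h12 h23 γ δ β γ' δ' β' hβ hβ' hnd heq
end
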